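/- Let θ ∈ ℝ and let A : {0,1} → ℂ be an arbitrary function. Then for every y ∈ {0,1}, e^{iθ·y} · e^{A(y)} = ∑_{x∈{0,1}} ∑_{h∈{0,1}} exp( W_θ(y,h) + W_θ(x,h) + A(x) ), where W_θ(x,h) = −(ln 2)/2 + (iθ/2)·x + iπ·x·h. That is, fusing a phase gadget by rule I onto a Boltzmann-machine amplitude implements multiplication by the phase gate Z(θ) with matrix entries δ_{yx}e^{iθx}. -/
import Mathlib


open Complex Real

/-- The phase gadget weight function
`W_θ(x,h) = −(ln 2)/2 + (iθ/2)·x + iπ·x·h` for binary `x, h`. -/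
noncomputable def Wθ (θ : ℝ) (x h : Fin 2) : ℂ :=
  -(Real.log 2 / 2) + Complex.I * θ / 2 * ((x : ℕ) : ℂ)
    + Complex.I * Real.pi * ((x : ℕ) : ℂ) * ((h : ℕ) : ℂ)

/-- Fusing a phase gadget by rule I onto a Boltzmann-machine amplitude `e^{A(x)}` implements
multiplication by the phase gate `Z(θ)` with matrix entries `δ_{yx} e^{iθx}`. -/
theorem phase_fusion (θ : ℝ) (A : Fin 2 → ℂ) (y : Fin 2) :
    Complex.exp (Complex.I * θ * ((y : ℕ) : ℂ)) * Complex.exp (A y)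
      = ∑ x : Fin 2, ∑ h : Fin 2, Complex.exp (Wθ θ y h + Wθ θ x h + A x) := by
  have h2 : Complex.exp (-(↑(Real.log 2) / 2)) * Complex.exp (-(↑(Real.log 2) / 2))
      = 1 / 2 := by
    rw [← Complex.exp_add]
    rw [show (-(((Real.log 2 : ℝ)) / 2 : ℂ) + -(((Real.log 2 : ℝ)) / 2 : ℂ))
        = ((-Real.log 2 : ℝ) : ℂ) by push_cast; ring]
    rw [← Complex.ofReal_exp, Real.exp_neg, Real.exp_log (by norm_num)]
    norm_num
  have hpi : Complex.exp (Complex.I * Real.pi) = -1 := by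
    rw [mul_comm]; exact Complex.exp_pi_mul_I
  have hθ : Complex.exp (Complex.I * θ / 2) * Complex.exp (Complex.I * θ / 2)
      = Complex.exp (Complex.I * θ) := by
    rw [← Complex.exp_add]; ring_nf
  fin_cases y <;>
    simp only [Wθ, Fin.sum_univ_two, Fin.isValue, Fin.mk_zero, Fin.mk_one,
      Fin.val_zero, Fin.val_one,
      Nat.cast_zero, Nat.cast_one, mul_zero, mul_one, add_zero, zero_add,
      Complex.exp_add, Complex.exp_zero, hpi]
  · linear_combination (-2 * Complex.exp (A 0)) * h2
  · linear_combination (-Complex.exp (A 1)) * hθ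
      - 2 * Complex.exp (Complex.I * θ / 2) * Complex.exp (Complex.I * θ / 2)
        * Complex.exp (A 1) * h2
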